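/- For any finite vector (k_1,...,k_j) of positive integers and any positive integers l and m, there is a bijection between (k_1,...,k_j,m)-Dyck paths and (k_1,...,k_j,l)-Dyck paths that preserves both the area and bounce statistics; consequently C_{(k_1,...,k_j,m)}(q,t) = C_{(k_1,...,k_j,l)}(q,t). -/

import Mathlib

/-- Partial sum `f 1 + ⋯ + f i`. -/
def psum {n : ℕ} (f : Fin n → ℕ) (i : Fin n) : ℕ :=
  ∑ t ∈ Finset.univ.filter (fun t => t ≤ i), f t

/-- Partial sum `f 1 + ⋯ + f (i-1)`. -/
def prevSum {n : ℕ} (f : Fin n → ℕ) (i : Fin n) : ℕ :=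
  ∑ t ∈ Finset.univ.filter (fun t => t < i), f t

/-- The north-step lengths of a vector `K`, as a function on `Fin K.length`. -/
def kfun (K : List ℕ) : Fin K.length → ℕ := fun i => K.get i

/-- The `K`-Dyck paths: a path is determined by the sequence `a` of numbers of
consecutive east steps after each north step; it is valid iff all partial red
ranks `∑_{t ≤ i} (k_t - a_t)` are nonnegative and the east steps sum to `n = K.sum`. -/
def vecDyckFinset (K : List ℕ) : Finset (Fin K.length → ℕ) :=
  (Fintype.piFinset fun _ => Finset.range (K.sum + 1)).filter fun a =>
    (∀ i, psum a i ≤ psum (kfun K) i) ∧ ∑ i, a i = K.sum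

/-- The area of a `K`-Dyck path: the sum of its red ranks. -/
def vecArea (K : List ℕ) (a : Fin K.length → ℕ) : ℕ :=
  ∑ i, (psum (kfun K) i - psum a i)

/-- The height of the lowest east step of the path above the column `x`. -/
def pathHeight (K : List ℕ) (a : Fin K.length → ℕ) (x : ℕ) : ℕ :=
  ∑ i ∈ Finset.univ.filter (fun i => prevSum a i ≤ x), kfun K i

/-- The Xin–Zhang bounce algorithm, computing the column start times `s` of the
rank tableau (column `j` of the tableau has `k_j + 1` cells, filled
`s j, s j + 1, …, s j + k j` downwards).  State: step counter `i`, bounce-path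
position `(x,y)`, number `cnt` of filled columns, partial `s`.  At each step,
`v` north steps of the path are traversed, the next `v` columns are filled
starting with `i`, and the bounce path moves east by the number `h` of tableau
cells containing `i+1`. -/
def bounceLoop (K : List ℕ) (a : Fin K.length → ℕ) :
    ℕ → ℕ → ℕ → ℕ → ℕ → (Fin K.length → ℕ) → (Fin K.length → ℕ)
  | 0, _, _, _, _, s => s
  | fuel + 1, i, x, y, cnt, s =>
      if x = K.sum ∧ y = K.sum then s
      else
        let v := (Finset.univ.filter fun j : Fin K.length => prevSum a j ≤ x).card - cnt
        let s' : Fin K.length → ℕ :=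
          fun j => if cnt ≤ (j : ℕ) ∧ (j : ℕ) < cnt + v then i else s j
        let h := (Finset.univ.filter fun j : Fin K.length =>
            (j : ℕ) < cnt + v ∧ s' j ≤ i + 1 ∧ i + 1 ≤ s' j + kfun K j).card
        bounceLoop K a fuel (i + 1) (x + h) (pathHeight K a x) (cnt + v) s'

/-- The Xin–Zhang bounce statistic `∑ᵢ i·vᵢ`: the sum of the first-row entries
of the rank tableau. -/
def vecBounce (K : List ℕ) (a : Fin K.length → ℕ) : ℕ :=
  ∑ j, bounceLoop K a (K.sum + K.length + 2) 0 0 0 0 (fun _ => 0) j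

open MvPolynomial in
/-- The refined q,t-Catalan number `C_K(q,t) = ∑_D q^{area D} t^{bounce D}`
(with `q = X 0`, `t = X 1`). -/
noncomputable def vecCat (K : List ℕ) : MvPolynomial (Fin 2) ℤ :=
  ∑ a ∈ vecDyckFinset K, X 0 ^ vecArea K a * X 1 ^ vecBounce K a

-- abbreviation for number of reached columns
def cFun (K : List ℕ) (a : Fin K.length → ℕ) (x : ℕ) : ℕ :=
  (Finset.univ.filter fun j : Fin K.length => prevSum a j ≤ x).card

theorem cFun_le (K : List ℕ) (a : Fin K.length → ℕ) (x : ℕ) : cFun K a x ≤ K.length := by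
  classical
  simpa [cFun] using Finset.card_filter_le Finset.univ (fun j : Fin K.length => prevSum a j ≤ x)

theorem bounceLoop_succ (K : List ℕ) (a : Fin K.length → ℕ) (fuel i x y cnt : ℕ)
    (s : Fin K.length → ℕ) :
    bounceLoop K a (fuel + 1) i x y cnt s =
      if x = K.sum ∧ y = K.sum then s
      else
        bounceLoop K a fuel (i + 1)
          (x + (Finset.univ.filter fun j : Fin K.length =>
            (j : ℕ) < cnt + (cFun K a x - cnt) ∧
            (if cnt ≤ (j : ℕ) ∧ (j : ℕ) < cnt + (cFun K a x - cnt) then i else s j) ≤ i + 1 ∧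
            i + 1 ≤ (if cnt ≤ (j : ℕ) ∧ (j : ℕ) < cnt + (cFun K a x - cnt) then i else s j) + kfun K j).card)
          (pathHeight K a x) (cnt + (cFun K a x - cnt))
          (fun j => if cnt ≤ (j : ℕ) ∧ (j : ℕ) < cnt + (cFun K a x - cnt) then i else s j) := by
  rfl

theorem bounceLoop_frozen (K : List ℕ) (a : Fin K.length → ℕ) :
    ∀ fuel i x y cnt s, K.length ≤ cnt → bounceLoop K a fuel i x y cnt s = s := by
  intro fuel
  induction fuel with
  | zero => intros; rfl
  | succ f ih =>
    intro i x y cnt s hcnt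
    rw [bounceLoop_succ]
    split
    · rfl
    have hv : cFun K a x - cnt = 0 := Nat.sub_eq_zero_of_le ((cFun_le K a x).trans hcnt)
    rw [hv]
    have hs' : (fun j : Fin K.length => if cnt ≤ (j : ℕ) ∧ (j : ℕ) < cnt + 0 then i else s j) = s := by
      funext j; rw [if_neg (by omega)]
    rw [hs']
    exact ih _ _ _ _ _ hcnt

theorem bounceLoop_stuck (K : List ℕ) (a : Fin K.length → ℕ) :
    ∀ fuel i x y cnt s, cFun K a x ≤ cnt →
      (∀ j : Fin K.length, (j : ℕ) < cnt → s j + kfun K j < i) →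
      bounceLoop K a fuel i x y cnt s = s := by
  intro fuel
  induction fuel with
  | zero => intros; rfl
  | succ f ih =>
    intro i x y cnt s hc hs
    rw [bounceLoop_succ]
    split
    · rfl
    have hv : cFun K a x - cnt = 0 := Nat.sub_eq_zero_of_le hc
    rw [hv]
    have hif : ∀ j : Fin K.length, (if cnt ≤ (j : ℕ) ∧ (j : ℕ) < cnt + 0 then i else s j) = s j :=
      fun j => if_neg (by omega)
    simp only [hif]
    have hh : (Finset.univ.filter fun j : Fin K.length =>
        (j : ℕ) < cnt + 0 ∧ s j ≤ i + 1 ∧ i + 1 ≤ s j + kfun K j).card = 0 := by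
      rw [Finset.card_eq_zero, Finset.filter_eq_empty_iff]
      intro j _
      intro hcond
      have := hs j (by omega)
      omega
    rw [hh]
    rw [Nat.add_zero, Nat.add_zero]
    exact ih _ _ _ _ _ hc (fun j hj => (hs j hj).trans (by omega))

theorem cFun_mono (K : List ℕ) (a : Fin K.length → ℕ) {x y : ℕ} (hxy : x ≤ y) :
    cFun K a x ≤ cFun K a y := by
  apply Finset.card_le_card
  intro j hj
  simp only [Finset.mem_filter] at *
  exact ⟨hj.1, hj.2.trans hxy⟩

theorem sum_kfun (K : List ℕ) : ∑ j, kfun K j = K.sum := by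
  unfold kfun
  simp [Fin.sum_univ_eq_sum_range (fun i => K[i]!)]

theorem pathHeight_eq_sum (K : List ℕ) (a : Fin K.length → ℕ) (x : ℕ)
    (hpos : ∀ j, 0 < kfun K j) (h : pathHeight K a x = K.sum) :
    cFun K a x = K.length := by
  classical
  have huniv : (Finset.univ.filter fun j : Fin K.length => prevSum a j ≤ x) = Finset.univ := by
    by_contra hne
    have : ∃ j, j ∉ (Finset.univ.filter fun j : Fin K.length => prevSum a j ≤ x) := by
      by_contra hall
      push_neg at hall
      exact hne (Finset.eq_univ_iff_forall.2 hall)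
    obtain ⟨j, hj⟩ := this
    have hlt : pathHeight K a x < ∑ j, kfun K j := by
      unfold pathHeight
      apply Finset.sum_lt_sum_of_subset (Finset.filter_subset _ _) (Finset.mem_univ j) hj (hpos j)
      intro _ _ _; exact Nat.zero_le _
    rw [h, sum_kfun] at hlt
    omega
  unfold cFun
  rw [huniv, Finset.card_univ, Fintype.card_fin]

theorem card_fin_band (n a b : ℕ) (h : b ≤ n) :
    (Finset.univ.filter fun j : Fin n => a ≤ (j : ℕ) ∧ (j : ℕ) < b).card = b - a := by
  classical
  rw [show b - a = (Finset.Ico a b).card by rw [Nat.card_Ico]]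
  refine Finset.card_bij' (fun (j : Fin n) _ => (j : ℕ))
    (fun t ht => (⟨t, by simp only [Finset.mem_Ico] at ht; omega⟩ : Fin n)) ?_ ?_ ?_ ?_
  · intro j hj; simp only [Finset.mem_filter, Finset.mem_univ, true_and] at hj
    simp only [Finset.mem_Ico]; omega
  · intro t ht; simp only [Finset.mem_Ico] at ht
    simp only [Finset.mem_filter, Finset.mem_univ, true_and]; omega
  · intro j hj; rfl
  · intro t ht; rfl

theorem bounceLoop_congr (K1 K2 : List ℕ) (hlen : K1.length = K2.length)
    (a1 : Fin K1.length → ℕ) (a2 : Fin K2.length → ℕ)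
    (hkk : ∀ j : Fin K1.length, (j : ℕ) + 1 < K1.length →
      kfun K1 j = kfun K2 (Fin.cast hlen j))
    (hk1 : ∀ j, 0 < kfun K1 j) (hk2 : ∀ j, 0 < kfun K2 j)
    (hC : ∀ z, cFun K2 a2 z = cFun K1 a1 z) :
    ∀ f1 f2 i x y1 y2 cnt (s1 : Fin K1.length → ℕ) (s2 : Fin K2.length → ℕ),
      (∀ j, s1 j = s2 (Fin.cast hlen j)) →
      cnt < K1.length →
      y1 ≠ K1.sum → y2 ≠ K2.sum →
      cnt ≤ cFun K1 a1 x →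
      (∀ j : Fin K1.length, (j : ℕ) < cnt → s1 j < i) →
      (x = ∑ j ∈ Finset.univ.filter (fun j : Fin K1.length => (j : ℕ) < cnt),
        min (kfun K1 j) (i - s1 j)) →
      (K1.length - cnt) +
        ((∑ j ∈ Finset.univ.filter (fun j : Fin K1.length => (j : ℕ) + 1 < K1.length),
          kfun K1 j) + 1 - x) < min f1 f2 →
      ∀ j, bounceLoop K1 a1 f1 i x y1 cnt s1 j
        = bounceLoop K2 a2 f2 i x y2 cnt s2 (Fin.cast hlen j) := by
  intro f1
  induction f1 with
  | zero => intro f2 i x y1 y2 cnt s1 s2 _ _ _ _ _ _ _ hfuel; exact absurd hfuel (by omega)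
  | succ f ih =>
    intro f2 i x y1 y2 cnt s1 s2 hs hcnt hy1 hy2 hI3 hI4 hI5 hfuel j
    have hf2 : f2 ≠ 0 := by rintro rfl; omega
    obtain ⟨f2, rfl⟩ := Nat.exists_eq_succ_of_ne_zero hf2
    rw [bounceLoop_succ, bounceLoop_succ]
    rw [if_neg (fun hc => hy1 hc.2), if_neg (fun hc => hy2 hc.2)]
    rw [hC x]
    set v := cFun K1 a1 x - cnt with hv
    set s1' : Fin K1.length → ℕ :=
      fun j => if cnt ≤ (j : ℕ) ∧ (j : ℕ) < cnt + v then i else s1 j with hs1'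
    set s2' : Fin K2.length → ℕ :=
      fun j => if cnt ≤ (j : ℕ) ∧ (j : ℕ) < cnt + v then i else s2 j with hs2'
    have hcle : cFun K1 a1 x ≤ K1.length := cFun_le K1 a1 x
    have hcv : cnt + v = cFun K1 a1 x := by omega
    have hvle : cnt + v ≤ K1.length := by omega
    have hs' : ∀ j : Fin K1.length, s1' j = s2' (Fin.cast hlen j) := by
      intro j
      simp only [hs1', hs2', Fin.coe_cast]
      exact if_congr Iff.rfl rfl (hs j)
    -- equality of the h counts
    have hh : (Finset.univ.filter fun j : Fin K2.length =>
          (j : ℕ) < cnt + v ∧ s2' j ≤ i + 1 ∧ i + 1 ≤ s2' j + kfun K2 j).card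
        = (Finset.univ.filter fun j : Fin K1.length =>
          (j : ℕ) < cnt + v ∧ s1' j ≤ i + 1 ∧ i + 1 ≤ s1' j + kfun K1 j).card := by
      refine (Finset.card_equiv (finCongr hlen) ?_).symm
      intro j
      simp only [Finset.mem_filter, Finset.mem_univ, true_and, finCongr_apply]
      have hcast : ((Fin.cast hlen j : Fin K2.length) : ℕ) = (j : ℕ) := rfl
      rw [hcast, ← hs' j]
      by_cases hjv : (j : ℕ) < cnt + v
      · simp only [hjv, true_and]
        by_cases hjlast : (j : ℕ) + 1 < K1.length
        · rw [hkk j hjlast]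
        · -- j is the last index; s1' j = i and both conditions are trivially true
          have hjc : cnt ≤ (j : ℕ) := by omega
          have hsi : s1' j = i := by
            simp only [hs1']
            rw [if_pos ⟨hjc, hjv⟩]
          rw [hsi]
          have h1 := hk1 j
          have h2 := hk2 (Fin.cast hlen j)
          constructor <;> intro <;> exact ⟨by omega, by omega⟩
      · simp [hjv]
    rw [hh]
    -- case: all columns filled
    by_cases hfull : K1.length ≤ cnt + v
    · rw [bounceLoop_frozen _ _ _ _ _ _ _ _ hfull,
        bounceLoop_frozen _ _ _ _ _ _ _ _ (hlen ▸ hfull)]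
      exact hs' j
    push_neg at hfull
    set h := (Finset.univ.filter fun j : Fin K1.length =>
      (j : ℕ) < cnt + v ∧ s1' j ≤ i + 1 ∧ i + 1 ≤ s1' j + kfun K1 j).card with hhdef
    -- the current goal is about states (i+1, x+h, ·, cnt+v, s·')
    have hG : (Finset.univ.filter fun j : Fin K1.length =>
        cnt ≤ (j : ℕ) ∧ (j : ℕ) < cnt + v).card = v := by
      rw [card_fin_band K1.length cnt (cnt + v) hvle]; omega
    have hF0union : (Finset.univ.filter fun j : Fin K1.length => (j : ℕ) < cnt + v)
        = (Finset.univ.filter fun j : Fin K1.length => (j : ℕ) < cnt)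
          ∪ (Finset.univ.filter fun j : Fin K1.length => cnt ≤ (j : ℕ) ∧ (j : ℕ) < cnt + v) := by
      ext t
      simp only [Finset.mem_filter, Finset.mem_union, Finset.mem_univ, true_and]
      omega
    have hdisj : Disjoint (Finset.univ.filter fun j : Fin K1.length => (j : ℕ) < cnt)
        (Finset.univ.filter fun j : Fin K1.length => cnt ≤ (j : ℕ) ∧ (j : ℕ) < cnt + v) := by
      rw [Finset.disjoint_left]
      intro t ht ht'
      simp only [Finset.mem_filter, Finset.mem_univ, true_and] at ht ht'
      omega
    have hs1F : ∀ t : Fin K1.length, (t : ℕ) < cnt → s1' t = s1 t := by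
      intro t ht
      simp only [hs1']
      rw [if_neg (by omega)]
    have hs1G : ∀ t : Fin K1.length, cnt ≤ (t : ℕ) → (t : ℕ) < cnt + v → s1' t = i := by
      intro t ht ht'
      simp only [hs1']
      rw [if_pos ⟨ht, ht'⟩]
    -- decompose h
    have hhsplit : h = v + (Finset.univ.filter fun t : Fin K1.length =>
        (t : ℕ) < cnt ∧ i + 1 ≤ s1 t + kfun K1 t).card := by
      rw [hhdef]
      have : (Finset.univ.filter fun t : Fin K1.length =>
          (t : ℕ) < cnt + v ∧ s1' t ≤ i + 1 ∧ i + 1 ≤ s1' t + kfun K1 t)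
          = (Finset.univ.filter fun t : Fin K1.length => cnt ≤ (t : ℕ) ∧ (t : ℕ) < cnt + v)
            ∪ (Finset.univ.filter fun t : Fin K1.length =>
              (t : ℕ) < cnt ∧ i + 1 ≤ s1 t + kfun K1 t) := by
        ext t
        simp only [Finset.mem_filter, Finset.mem_union, Finset.mem_univ, true_and]
        by_cases hc : cnt ≤ (t : ℕ) ∧ (t : ℕ) < cnt + v
        · rw [hs1G t hc.1 hc.2]
          have := hk1 t
          constructor
          · intro _; exact Or.inl hc
          · intro _; exact ⟨hc.2, by omega, by omega⟩
        · by_cases htc : (t : ℕ) < cnt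
          · rw [hs1F t htc]
            have h4 := hI4 t htc
            constructor
            · rintro ⟨-, -, hx⟩; exact Or.inr ⟨htc, hx⟩
            · rintro (hc' | ⟨-, hx⟩)
              · exact absurd hc' hc
              · exact ⟨by omega, by omega, hx⟩
          · constructor
            · rintro ⟨hx, -⟩; omega
            · rintro (hc' | ⟨hc', -⟩) <;> omega
      rw [this, Finset.card_union_of_disjoint (Finset.disjoint_left.2 ?_), hG]
      · intro t ht ht'
        simp only [Finset.mem_filter, Finset.mem_univ, true_and] at ht ht'
        omega
    -- the new invariant I5
    have hI5' : x + h = ∑ t ∈ Finset.univ.filter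
        (fun t : Fin K1.length => (t : ℕ) < cnt + v), min (kfun K1 t) ((i + 1) - s1' t) := by
      rw [hF0union, Finset.sum_union hdisj]
      have hGsum : ∑ t ∈ (Finset.univ.filter fun t : Fin K1.length =>
          cnt ≤ (t : ℕ) ∧ (t : ℕ) < cnt + v), min (kfun K1 t) ((i + 1) - s1' t)
          = v := by
        have hone : ∀ t ∈ (Finset.univ.filter fun t : Fin K1.length =>
            cnt ≤ (t : ℕ) ∧ (t : ℕ) < cnt + v),
            min (kfun K1 t) ((i + 1) - s1' t) = 1 := by
          intro t ht
          simp only [Finset.mem_filter, Finset.mem_univ, true_and] at ht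
          rw [hs1G t ht.1 ht.2]
          have := hk1 t
          omega
        rw [Finset.sum_congr rfl hone, Finset.sum_const, smul_eq_mul, mul_one, hG]
      rw [hGsum]
      have hFsum : ∑ t ∈ (Finset.univ.filter fun t : Fin K1.length => (t : ℕ) < cnt),
          min (kfun K1 t) ((i + 1) - s1' t)
          = x + (Finset.univ.filter fun t : Fin K1.length =>
              (t : ℕ) < cnt ∧ i + 1 ≤ s1 t + kfun K1 t).card := by
        have hcard : (Finset.univ.filter fun t : Fin K1.length =>
            (t : ℕ) < cnt ∧ i + 1 ≤ s1 t + kfun K1 t).card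
            = ∑ t ∈ (Finset.univ.filter fun t : Fin K1.length => (t : ℕ) < cnt),
              (if i + 1 ≤ s1 t + kfun K1 t then 1 else 0) := by
          rw [← Finset.filter_filter, Finset.card_filter]
        rw [hcard, hI5, ← Finset.sum_add_distrib]
        apply Finset.sum_congr rfl
        intro t ht
        simp only [Finset.mem_filter, Finset.mem_univ, true_and] at ht
        rw [hs1F t ht]
        have h4 := hI4 t ht
        split <;> omega
      rw [hFsum, hhsplit]
      omega
    by_cases hst : v = 0 ∧ h = 0
    · -- the bounce path is stuck; both sides never change `s` again
      obtain ⟨hv0, hh0⟩ := hst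
      have hempty : (Finset.univ.filter fun t : Fin K1.length =>
          (t : ℕ) < cnt + v ∧ s1' t ≤ i + 1 ∧ i + 1 ≤ s1' t + kfun K1 t) = ∅ :=
        Finset.card_eq_zero.mp (hhdef ▸ hh0)
      have hF0 : ∀ t : Fin K1.length,
          ¬((t : ℕ) < cnt + v ∧ s1' t ≤ i + 1 ∧ i + 1 ≤ s1' t + kfun K1 t) := by
        intro t ht
        have : t ∈ (∅ : Finset (Fin K1.length)) := by
          rw [← hempty]; exact Finset.mem_filter.2 ⟨Finset.mem_univ t, ht⟩
        simp at this
      have hbound1 : ∀ t : Fin K1.length, (t : ℕ) < cnt + v →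
          s1' t + kfun K1 t < i + 1 := by
        intro t ht
        have htc : (t : ℕ) < cnt := by omega
        have h4 := hI4 t htc
        have := hF0 t
        rw [hs1F t htc] at this ⊢
        omega
      have hc1 : cFun K1 a1 (x + h) ≤ cnt + v := by
        rw [hh0, Nat.add_zero]; omega
      have hc2 : cFun K2 a2 (x + h) ≤ cnt + v := by rw [hC]; exact hc1
      rw [bounceLoop_stuck K1 a1 f (i + 1) (x + h) _ (cnt + v) s1' hc1 hbound1,
        bounceLoop_stuck K2 a2 f2 (i + 1) (x + h) _ (cnt + v) s2' hc2 ?hb2]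
      · exact hs' j
      case hb2 =>
        intro t ht
        have ht1 : ((Fin.cast hlen.symm t : Fin K1.length) : ℕ) < cnt + v := ht
        have hcast : Fin.cast hlen (Fin.cast hlen.symm t) = t := rfl
        have hkt : kfun K2 t = kfun K1 (Fin.cast hlen.symm t) := by
          rw [hkk (Fin.cast hlen.symm t) (by simpa using by omega : ((Fin.cast hlen.symm t : Fin K1.length) : ℕ) + 1 < K1.length), hcast]
        rw [← hcast, ← hs' (Fin.cast hlen.symm t), hcast, hkt]
        exact hbound1 _ ht1
    -- productive step: apply the induction hypothesis
    have hprod : 0 < v ∨ 0 < h := by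
      rcases Nat.eq_zero_or_pos v with hv0 | hv0
      · rcases Nat.eq_zero_or_pos h with hh0 | hh0
        · exact absurd ⟨hv0, hh0⟩ hst
        · exact Or.inr hh0
      · exact Or.inl hv0
    have hxh : x + h ≤ ∑ t ∈ Finset.univ.filter
        (fun t : Fin K1.length => (t : ℕ) + 1 < K1.length), kfun K1 t := by
      rw [hI5']
      calc ∑ t ∈ Finset.univ.filter (fun t : Fin K1.length => (t : ℕ) < cnt + v),
            min (kfun K1 t) ((i + 1) - s1' t)
          ≤ ∑ t ∈ Finset.univ.filter (fun t : Fin K1.length => (t : ℕ) < cnt + v),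
            kfun K1 t := Finset.sum_le_sum (fun t _ => Nat.min_le_left _ _)
        _ ≤ _ := by
            apply Finset.sum_le_sum_of_subset
            intro t ht
            simp only [Finset.mem_filter, Finset.mem_univ, true_and] at *
            omega
    have hy1' : pathHeight K1 a1 x ≠ K1.sum := by
      intro he
      have := pathHeight_eq_sum K1 a1 x hk1 he
      omega
    have hy2' : pathHeight K2 a2 x ≠ K2.sum := by
      intro he
      have h2 := pathHeight_eq_sum K2 a2 x hk2 he
      rw [hC] at h2
      omega
    have hI3' : cnt + v ≤ cFun K1 a1 (x + h) :=
      hcv ▸ cFun_mono K1 a1 (Nat.le_add_right x h)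
    have hI4' : ∀ t : Fin K1.length, (t : ℕ) < cnt + v → s1' t < i + 1 := by
      intro t ht
      by_cases hc : cnt ≤ (t : ℕ)
      · rw [hs1G t hc ht]; omega
      · rw [hs1F t (by omega)]
        have := hI4 t (by omega)
        omega
    have hfuel' : K1.length - (cnt + v) +
        ((∑ t ∈ Finset.univ.filter (fun t : Fin K1.length => (t : ℕ) + 1 < K1.length),
          kfun K1 t) + 1 - (x + h)) < min f f2 := by
      rcases hprod with hv0 | hh0
      · have hxx : x ≤ x + h := Nat.le_add_right x h
        omega
      · omega
    exact ih f2 (i + 1) (x + h) _ _ (cnt + v) s1' s2' hs' hfull hy1' hy2' hI3' hI4' hI5' hfuel' j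

theorem vecBounce_congr (K1 K2 : List ℕ) (hlen : K1.length = K2.length)
    (a1 : Fin K1.length → ℕ) (a2 : Fin K2.length → ℕ)
    (hkk : ∀ j : Fin K1.length, (j : ℕ) + 1 < K1.length →
      kfun K1 j = kfun K2 (Fin.cast hlen j))
    (hk1 : ∀ j, 0 < kfun K1 j) (hk2 : ∀ j, 0 < kfun K2 j)
    (hC : ∀ z, cFun K2 a2 z = cFun K1 a1 z)
    (hpos : 0 < K1.length) :
    vecBounce K1 a1 = vecBounce K2 a2 := by
  have hne1 : K1.sum ≠ 0 := by
    intro he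
    have := sum_kfun K1
    rw [he] at this
    obtain ⟨j⟩ := Fin.pos_iff_nonempty.mp hpos
    have h0 : kfun K1 j = 0 := by
      have := Finset.sum_eq_zero_iff.mp this j (Finset.mem_univ j)
      exact this
    exact absurd h0 (by have := hk1 j; omega)
  have hne2 : K2.sum ≠ 0 := by
    intro he
    have := sum_kfun K2
    rw [he] at this
    obtain ⟨j⟩ := Fin.pos_iff_nonempty.mp (hlen ▸ hpos)
    have h0 := Finset.sum_eq_zero_iff.mp this j (Finset.mem_univ j)
    exact absurd h0 (by have := hk2 j; omega)
  have hB1 : (∑ t ∈ Finset.univ.filter (fun t : Fin K1.length => (t : ℕ) + 1 < K1.length),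
      kfun K1 t) ≤ K1.sum := by
    rw [← sum_kfun K1]
    exact Finset.sum_le_sum_of_subset (Finset.filter_subset _ _)
  have hB2 : (∑ t ∈ Finset.univ.filter (fun t : Fin K1.length => (t : ℕ) + 1 < K1.length),
      kfun K1 t) ≤ K2.sum := by
    rw [← sum_kfun K2]
    calc (∑ t ∈ Finset.univ.filter (fun t : Fin K1.length => (t : ℕ) + 1 < K1.length),
          kfun K1 t)
        = ∑ t ∈ Finset.univ.filter (fun t : Fin K2.length => (t : ℕ) + 1 < K2.length),
          kfun K2 t := by
          apply Finset.sum_equiv (finCongr hlen)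
          · intro t
            simp only [Finset.mem_filter, Finset.mem_univ, true_and, finCongr_apply,
              Fin.coe_cast]
            omega
          · intro t ht
            simp only [Finset.mem_filter, Finset.mem_univ, true_and] at ht
            exact hkk t ht
      _ ≤ ∑ t, kfun K2 t := Finset.sum_le_sum_of_subset (Finset.filter_subset _ _)
  unfold vecBounce
  apply Fintype.sum_equiv (finCongr hlen)
  intro j
  apply bounceLoop_congr K1 K2 hlen a1 a2 hkk hk1 hk2 hC
  · intro _; rfl
  · exact hpos
  · exact fun he => hne1 he.symm
  · exact fun he => hne2 he.symm
  · exact Nat.zero_le _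
  · intro t ht; omega
  · rw [Finset.filter_false_of_mem, Finset.sum_empty]
    intro t _; omega
  · omega

section Append

variable (k : List ℕ) (x : ℕ)

theorem applen : (k ++ [x]).length = k.length + 1 := by simp

/-- The last index of `k ++ [x]`. -/
def lastIdx : Fin (k ++ [x]).length := ⟨k.length, by simp⟩

theorem coe_lt (j : Fin (k ++ [x]).length) : (j : ℕ) < k.length + 1 := by
  have := j.2; simpa using this

theorem kfun_append_lt (j : Fin (k ++ [x]).length) (h : (j : ℕ) < k.length) :
    kfun (k ++ [x]) j = k.get ⟨j, h⟩ := by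
  unfold kfun
  simp only [List.get_eq_getElem]
  rw [List.getElem_append_left]

theorem kfun_append_last (j : Fin (k ++ [x]).length) (h : (j : ℕ) = k.length) :
    kfun (k ++ [x]) j = x := by
  unfold kfun
  simp only [List.get_eq_getElem]
  rw [List.getElem_append_right] <;> simp [h]

theorem kfun_append_pos (hk : ∀ y ∈ k, 0 < y) (hx : 0 < x) (j : Fin (k ++ [x]).length) :
    0 < kfun (k ++ [x]) j := by
  by_cases h : (j : ℕ) < k.length
  · rw [kfun_append_lt k x j h]
    exact hk _ (List.get_mem k _)
  · have := coe_lt k x j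
    rw [kfun_append_last k x j (by omega)]
    exact hx

theorem sum_split (g : Fin (k ++ [x]).length → ℕ) :
    ∑ t, g t = (∑ t ∈ Finset.univ.filter
      (fun t : Fin (k ++ [x]).length => (t : ℕ) < k.length), g t) + g (lastIdx k x) := by
  have huniv : (Finset.univ : Finset (Fin (k ++ [x]).length))
      = Finset.univ.filter (fun t : Fin (k ++ [x]).length => (t : ℕ) < k.length)
        ∪ {lastIdx k x} := by
    ext t
    simp only [Finset.mem_univ, Finset.mem_union, Finset.mem_filter, Finset.mem_singleton,
      true_and, true_iff]
    by_cases h : (t : ℕ) < k.length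
    · exact Or.inl h
    · right
      have := coe_lt k x t
      exact Fin.ext (by simpa [lastIdx] using by omega)
  have hdisj : Disjoint (Finset.univ.filter
      (fun t : Fin (k ++ [x]).length => (t : ℕ) < k.length)) ({lastIdx k x} : Finset _) := by
    rw [Finset.disjoint_singleton_right]
    simp [lastIdx]
  nth_rewrite 1 [huniv]
  rw [Finset.sum_union hdisj, Finset.sum_singleton]

theorem psum_last (g : Fin (k ++ [x]).length → ℕ) :
    psum g (lastIdx k x) = ∑ t, g t := by
  unfold psum
  congr 1
  rw [Finset.eq_univ_iff_forall]
  intro t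
  simp only [Finset.mem_filter, Finset.mem_univ, true_and]
  rw [Fin.le_def]
  have := coe_lt k x t
  simp only [lastIdx]
  omega

theorem sum_append_k : (k ++ [x]).sum = k.sum + x := by simp

theorem sum_prefix_kfun :
    ∑ t ∈ Finset.univ.filter (fun t : Fin (k ++ [x]).length => (t : ℕ) < k.length),
      kfun (k ++ [x]) t = k.sum := by
  have h1 := sum_split k x (kfun (k ++ [x]))
  rw [sum_kfun, kfun_append_last k x _ rfl, sum_append_k] at h1
  omega

end Append

theorem mem_vecDyck_iff (K : List ℕ) (a : Fin K.length → ℕ) :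
    a ∈ vecDyckFinset K ↔
      (∀ j, a j < K.sum + 1) ∧ (∀ i, psum a i ≤ psum (kfun K) i) ∧ ∑ i, a i = K.sum := by
  unfold vecDyckFinset
  simp only [Finset.mem_filter, Fintype.mem_piFinset, Finset.mem_range, and_assoc]

section Adj

variable (k : List ℕ) (m l : ℕ)

def adjMap (a : Fin (k ++ [m]).length → ℕ) : Fin (k ++ [l]).length → ℕ :=
  fun j => if (j : ℕ) = k.length
    then a (Fin.cast (by simp) j) + l - m
    else a (Fin.cast (by simp) j)

theorem adjMap_last (a : Fin (k ++ [m]).length → ℕ) :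
    adjMap k m l a (lastIdx k l) = a (lastIdx k m) + l - m := by
  unfold adjMap
  rw [if_pos (show ((lastIdx k l : Fin (k ++ [l]).length) : ℕ) = k.length from rfl)]
  congr 1

theorem adjMap_ne (a : Fin (k ++ [m]).length → ℕ) (j : Fin (k ++ [l]).length)
    (h : (j : ℕ) ≠ k.length) :
    adjMap k m l a j = a (Fin.cast (by simp) j) := by
  unfold adjMap
  rw [if_neg h]

end Adj

section Adj2

variable (k : List ℕ) (m l : ℕ)

theorem prevSum_adj_eq (a : Fin (k ++ [m]).length → ℕ)
    (j1 : Fin (k ++ [m]).length) (j2 : Fin (k ++ [l]).length) (hj : (j1 : ℕ) = (j2 : ℕ)) :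
    prevSum (adjMap k m l a) j2 = prevSum a j1 := by
  unfold prevSum
  apply Finset.sum_equiv (finCongr (show (k ++ [l]).length = (k ++ [m]).length by simp))
  · intro t
    simp only [Finset.mem_filter, Finset.mem_univ, true_and, finCongr_apply, Fin.lt_def,
      Fin.coe_cast]
    omega
  · intro t ht
    simp only [Finset.mem_filter, Finset.mem_univ, true_and, Fin.lt_def] at ht
    have htl : (t : ℕ) ≠ k.length := by
      have := coe_lt k l j2
      omega
    rw [adjMap_ne k m l a t htl]
    rfl

theorem psum_adj_eq (a : Fin (k ++ [m]).length → ℕ)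
    (i1 : Fin (k ++ [m]).length) (i2 : Fin (k ++ [l]).length) (hj : (i1 : ℕ) = (i2 : ℕ))
    (hlt : (i1 : ℕ) < k.length) :
    psum (adjMap k m l a) i2 = psum a i1 := by
  unfold psum
  apply Finset.sum_equiv (finCongr (show (k ++ [l]).length = (k ++ [m]).length by simp))
  · intro t
    simp only [Finset.mem_filter, Finset.mem_univ, true_and, finCongr_apply, Fin.le_def,
      Fin.coe_cast]
    omega
  · intro t ht
    simp only [Finset.mem_filter, Finset.mem_univ, true_and, Fin.le_def] at ht
    have htl : (t : ℕ) ≠ k.length := by omega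
    rw [adjMap_ne k m l a t htl]
    rfl

theorem psum_kfun_eq (i1 : Fin (k ++ [m]).length) (i2 : Fin (k ++ [l]).length)
    (hj : (i1 : ℕ) = (i2 : ℕ)) (hlt : (i1 : ℕ) < k.length) :
    psum (kfun (k ++ [l])) i2 = psum (kfun (k ++ [m])) i1 := by
  unfold psum
  apply Finset.sum_equiv (finCongr (show (k ++ [l]).length = (k ++ [m]).length by simp))
  · intro t
    simp only [Finset.mem_filter, Finset.mem_univ, true_and, finCongr_apply, Fin.le_def,
      Fin.coe_cast]
    omega
  · intro t ht
    simp only [Finset.mem_filter, Finset.mem_univ, true_and, Fin.le_def] at ht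
    have htl : (t : ℕ) < k.length := by omega
    rw [kfun_append_lt k l t htl, kfun_append_lt k m _ (show ((finCongr
      (show (k ++ [l]).length = (k ++ [m]).length by simp) t : Fin (k ++ [m]).length) : ℕ)
      < k.length from htl)]
    rfl

theorem P_adj_eq (a : Fin (k ++ [m]).length → ℕ) :
    ∑ t ∈ Finset.univ.filter (fun t : Fin (k ++ [l]).length => (t : ℕ) < k.length),
      adjMap k m l a t
    = ∑ t ∈ Finset.univ.filter (fun t : Fin (k ++ [m]).length => (t : ℕ) < k.length), a t := by
  apply Finset.sum_equiv (finCongr (show (k ++ [l]).length = (k ++ [m]).length by simp))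
  · intro t
    simp only [Finset.mem_filter, Finset.mem_univ, true_and, finCongr_apply, Fin.coe_cast]
  · intro t ht
    simp only [Finset.mem_filter, Finset.mem_univ, true_and] at ht
    rw [adjMap_ne k m l a t (by omega)]
    rfl

end Adj2

section Adj3

variable (k : List ℕ) (m l : ℕ)

theorem P_le (a : Fin (k ++ [m]).length → ℕ) (ha : a ∈ vecDyckFinset (k ++ [m])) :
    ∑ t ∈ Finset.univ.filter (fun t : Fin (k ++ [m]).length => (t : ℕ) < k.length), a t
      ≤ k.sum := by
  obtain ⟨-, hle, -⟩ := (mem_vecDyck_iff _ a).mp ha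
  rcases Nat.eq_zero_or_pos k.length with h0 | h0
  · rw [Finset.filter_false_of_mem, Finset.sum_empty]
    · exact Nat.zero_le _
    · intro t _; omega
  · set i0 : Fin (k ++ [m]).length := ⟨k.length - 1, by have := applen k m; omega⟩ with hi0
    have hfilter : (Finset.univ.filter (fun t : Fin (k ++ [m]).length => t ≤ i0))
        = Finset.univ.filter (fun t : Fin (k ++ [m]).length => (t : ℕ) < k.length) := by
      ext t
      simp only [Finset.mem_filter, Finset.mem_univ, true_and, Fin.le_def, hi0]
      omega
    have h1 := hle i0
    unfold psum at h1
    rw [hfilter] at h1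
    calc _ ≤ ∑ t ∈ Finset.univ.filter
          (fun t : Fin (k ++ [m]).length => (t : ℕ) < k.length), kfun (k ++ [m]) t := h1
      _ = k.sum := sum_prefix_kfun k m

theorem P_add_last (a : Fin (k ++ [m]).length → ℕ) (ha : a ∈ vecDyckFinset (k ++ [m])) :
    (∑ t ∈ Finset.univ.filter (fun t : Fin (k ++ [m]).length => (t : ℕ) < k.length), a t)
      + a (lastIdx k m) = k.sum + m := by
  obtain ⟨-, -, hsum⟩ := (mem_vecDyck_iff _ a).mp ha
  have := sum_split k m a
  rw [hsum, sum_append_k] at this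
  omega

theorem last_ge (a : Fin (k ++ [m]).length → ℕ) (ha : a ∈ vecDyckFinset (k ++ [m])) :
    m ≤ a (lastIdx k m) := by
  have h1 := P_le k m a ha
  have h2 := P_add_last k m a ha
  omega

theorem a_entry_le (a : Fin (k ++ [m]).length → ℕ) (ha : a ∈ vecDyckFinset (k ++ [m]))
    (t : Fin (k ++ [m]).length) (ht : (t : ℕ) < k.length) : a t ≤ k.sum := by
  obtain ⟨-, hle, -⟩ := (mem_vecDyck_iff _ a).mp ha
  have h1 : a t ≤ psum a t := by
    unfold psum
    exact Finset.single_le_sum (fun _ _ => Nat.zero_le _)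
      (Finset.mem_filter.2 ⟨Finset.mem_univ t, le_refl t⟩)
  have h2 : psum (kfun (k ++ [m])) t ≤ k.sum := by
    rw [← sum_prefix_kfun k m]
    apply Finset.sum_le_sum_of_subset
    intro u hu
    simp only [Finset.mem_filter, Finset.mem_univ, true_and, Fin.le_def] at *
    omega
  exact h1.trans ((hle t).trans h2)

theorem adjMap_mem (a : Fin (k ++ [m]).length → ℕ) (ha : a ∈ vecDyckFinset (k ++ [m])) :
    adjMap k m l a ∈ vecDyckFinset (k ++ [l]) := by
  have hPle := P_le k m a ha
  have hPlast := P_add_last k m a ha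
  have hlge := last_ge k m a ha
  -- the partial sum of `adjMap` at the last index, i.e. the total sum
  have hsum2 : ∑ t, adjMap k m l a t = (k ++ [l]).sum := by
    rw [sum_split k l, adjMap_last k m l a, P_adj_eq k m l a, sum_append_k]
    omega
  rw [mem_vecDyck_iff]
  refine ⟨?_, ?_, hsum2⟩
  · intro j
    by_cases hj : (j : ℕ) = k.length
    · have hjl : j = lastIdx k l := Fin.ext hj
      rw [hjl, adjMap_last k m l a, sum_append_k]
      omega
    · have hjlt : (j : ℕ) < k.length := by have := coe_lt k l j; omega
      rw [adjMap_ne k m l a j hj, sum_append_k]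
      have := a_entry_le k m a ha (Fin.cast (by simp) j) hjlt
      omega
  · intro i
    by_cases hi : (i : ℕ) = k.length
    · have hil : i = lastIdx k l := Fin.ext hi
      rw [hil, psum_last, psum_last, hsum2, sum_kfun]
    · have hilt : (i : ℕ) < k.length := by have := coe_lt k l i; omega
      obtain ⟨-, hle, -⟩ := (mem_vecDyck_iff _ a).mp ha
      set i1 : Fin (k ++ [m]).length := ⟨(i : ℕ), by have := applen k m; omega⟩ with hi1
      rw [psum_adj_eq k m l a i1 i rfl hilt, psum_kfun_eq k m l i1 i rfl hilt]
      exact hle i1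

theorem adjMap_adjMap (a : Fin (k ++ [m]).length → ℕ) (ha : a ∈ vecDyckFinset (k ++ [m])) :
    adjMap k l m (adjMap k m l a) = a := by
  have hlge := last_ge k m a ha
  funext j
  by_cases hj : (j : ℕ) = k.length
  · have hjl : j = lastIdx k m := Fin.ext hj
    rw [hjl, adjMap_last k l m _, adjMap_last k m l a]
    omega
  · rw [adjMap_ne k l m _ j hj, adjMap_ne k m l a _ hj]
    exact congrArg a (Fin.ext rfl)

theorem area_adjMap (a : Fin (k ++ [m]).length → ℕ) (ha : a ∈ vecDyckFinset (k ++ [m])) :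
    vecArea (k ++ [l]) (adjMap k m l a) = vecArea (k ++ [m]) a := by
  unfold vecArea
  apply Fintype.sum_equiv (finCongr (show (k ++ [l]).length = (k ++ [m]).length by simp))
  intro i
  by_cases hi : (i : ℕ) = k.length
  · have hil : i = lastIdx k l := Fin.ext hi
    have hil' : (finCongr (show (k ++ [l]).length = (k ++ [m]).length by simp) (lastIdx k l))
        = lastIdx k m := Fin.ext rfl
    rw [hil, hil', psum_last, psum_last, psum_last, psum_last]
    obtain ⟨-, -, hsum⟩ := (mem_vecDyck_iff _ a).mp ha
    have hsum2 : ∑ t, adjMap k m l a t = (k ++ [l]).sum := by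
      have hPle := P_le k m a ha
      have hPlast := P_add_last k m a ha
      have hlge := last_ge k m a ha
      rw [sum_split k l, adjMap_last k m l a, P_adj_eq k m l a, sum_append_k]
      omega
    rw [hsum2, hsum, sum_kfun, sum_kfun]
    omega
  · have hilt : (i : ℕ) < k.length := by have := coe_lt k l i; omega
    set i1 : Fin (k ++ [m]).length := ⟨(i : ℕ), by have := applen k m; omega⟩ with hi1
    have : (finCongr (show (k ++ [l]).length = (k ++ [m]).length by simp) i) = i1 :=
      Fin.ext rfl
    rw [this, psum_adj_eq k m l a i1 i rfl hilt, psum_kfun_eq k m l i1 i rfl hilt]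

end Adj3

theorem bounce_adjMap (k : List ℕ) (m l : ℕ) (hk : ∀ y ∈ k, 0 < y) (hm : 0 < m) (hl : 0 < l)
    (a : Fin (k ++ [m]).length → ℕ) :
    vecBounce (k ++ [l]) (adjMap k m l a) = vecBounce (k ++ [m]) a := by
  symm
  apply vecBounce_congr (k ++ [m]) (k ++ [l]) (by simp) a (adjMap k m l a)
  · intro j hj
    have hjlt : (j : ℕ) < k.length := by have := applen k m; omega
    rw [kfun_append_lt k m j hjlt, kfun_append_lt k l _ (show ((Fin.cast (show
      (k ++ [m]).length = (k ++ [l]).length by simp) j : Fin (k ++ [l]).length) : ℕ)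
      < k.length from hjlt)]
    rfl
  · exact kfun_append_pos k m hk hm
  · exact kfun_append_pos k l hk hl
  · intro z
    apply Finset.card_equiv (finCongr (show (k ++ [l]).length = (k ++ [m]).length by simp))
    intro t
    simp only [Finset.mem_filter, Finset.mem_univ, true_and, finCongr_apply]
    rw [prevSum_adj_eq k m l a (Fin.cast (show (k ++ [l]).length = (k ++ [m]).length by simp) t)
      t rfl]
  · have := applen k m; omega

theorem vecCat_last_entry_bijection_aux (k : List ℕ) (hk : ∀ x ∈ k, 0 < x)
    (m l : ℕ) (hm : 0 < m) (hl : 0 < l) :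
    (∃ e : {a // a ∈ vecDyckFinset (k ++ [m])} ≃ {a // a ∈ vecDyckFinset (k ++ [l])},
        ∀ D : {a // a ∈ vecDyckFinset (k ++ [m])},
          vecArea (k ++ [l]) (e D).1 = vecArea (k ++ [m]) D.1 ∧
          vecBounce (k ++ [l]) (e D).1 = vecBounce (k ++ [m]) D.1) ∧
    vecCat (k ++ [m]) = vecCat (k ++ [l]) := by
  constructor
  · refine ⟨⟨fun D => ⟨adjMap k m l D.1, adjMap_mem k m l D.1 D.2⟩,
      fun D => ⟨adjMap k l m D.1, adjMap_mem k l m D.1 D.2⟩,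
      fun D => Subtype.ext (adjMap_adjMap k m l D.1 D.2),
      fun D => Subtype.ext (adjMap_adjMap k l m D.1 D.2)⟩, ?_⟩
    intro D
    exact ⟨area_adjMap k m l D.1 D.2, bounce_adjMap k m l hk hm hl D.1⟩
  · unfold vecCat
    apply Finset.sum_nbij' (adjMap k m l) (adjMap k l m)
    · intro a ha; exact adjMap_mem k m l a ha
    · intro a ha; exact adjMap_mem k l m a ha
    · intro a ha; exact adjMap_adjMap k m l a ha
    · intro a ha; exact adjMap_adjMap k l m a ha
    · intro a ha
      rw [area_adjMap k m l a ha, bounce_adjMap k m l hk hm hl a]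

/-- For any vector `(k₁,…,kⱼ)` of positive integers and any positive `m, l`,
there is a bijection between `(k₁,…,kⱼ,m)`-Dyck paths and `(k₁,…,kⱼ,l)`-Dyck
paths preserving area and bounce; consequently
`C_{(k₁,…,kⱼ,m)}(q,t) = C_{(k₁,…,kⱼ,l)}(q,t)`. -/
theorem vecCat_last_entry_bijection (k : List ℕ) (hk : ∀ x ∈ k, 0 < x)
    (m l : ℕ) (hm : 0 < m) (hl : 0 < l) :
    (∃ e : {a // a ∈ vecDyckFinset (k ++ [m])} ≃ {a // a ∈ vecDyckFinset (k ++ [l])},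
        ∀ D : {a // a ∈ vecDyckFinset (k ++ [m])},
          vecArea (k ++ [l]) (e D).1 = vecArea (k ++ [m]) D.1 ∧
          vecBounce (k ++ [l]) (e D).1 = vecBounce (k ++ [m]) D.1) ∧
    vecCat (k ++ [m]) = vecCat (k ++ [l]) := by
  exact vecCat_last_entry_bijection_aux k hk m l hm hl
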